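/- For every integer n ≥ 0, c(f⁽³⁾;n) ≡ p(n) (mod 4) and c(φ⁽³⁾;n) ≡ p(n) (mod 2), where p(n) is the number of partitions of n. -/

import Mathlib

/-!
Modulo 4 we have `(1 + q^j)^2 ≡ (1 - q^j)^2`, and modulo 2 we have `1 + q^{2j} ≡ (1 - q^j)^2`,
so both mock theta functions reduce to `∑_k q^{k²} / (q;q)_k²`. This series counts partitions
by the side `k` of their Durfee square: removing the `k × k` square leaves a partition into parts
`≤ k` (below the square) and a partition into at most `k` parts (to its right), and `1 / (q;q)_k`
generates either kind, since both counts satisfy `a_{k+1}(n) = a_k(n) + a_{k+1}(n - k - 1)`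
(remove one part `k + 1`, resp. the first column).
-/

open PowerSeries Finset
open scoped Classical

noncomputable section

/-- The generalized q-Pochhammer symbol `(a;b)_n = ∏_{j=0}^{n-1} (1 - a·bʲ)`
in the ring `ℤ⟦q⟧` of formal power series (here the variable `q` is `PowerSeries.X`). -/
def qPoch (a b : PowerSeries ℤ) (n : ℕ) : PowerSeries ℤ :=
  ∏ j ∈ Finset.range n, (1 - a * b ^ j)

/-- Division of formal power series; this is genuine division whenever the denominator
has constant coefficient `1`. -/
def psDiv (f g : PowerSeries ℤ) : PowerSeries ℤ :=
  f * PowerSeries.invOfUnit g 1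

/-- The coefficientwise sum of a family of formal power series. -/
def psSum (f : ℕ → PowerSeries ℤ) : PowerSeries ℤ :=
  PowerSeries.mk fun n => ∑' k, PowerSeries.coeff n (f k)

/-- The third order mock theta function `f⁽³⁾(q) = ∑_{n≥0} q^{n²} / ((−q;q)_n)²`. -/
def mockF3 : PowerSeries ℤ :=
  psSum fun n => psDiv (X ^ (n ^ 2)) ((qPoch (-X) X n) ^ 2)

/-- The third order mock theta function `φ⁽³⁾(q) = ∑_{n≥0} q^{n²} / (−q²;q²)_n`. -/
def mockPhi3 : PowerSeries ℤ :=
  psSum fun n => psDiv (X ^ (n ^ 2)) (qPoch (-(X ^ 2)) (X ^ 2) n)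

namespace PowerSeries

theorem prod_one_sub_X_pow_mul_mk_eq_one {R : Type*} [CommRing R] (a : ℕ → ℕ → ℕ)
    (h0 : ∀ n, a 0 n = if n = 0 then 1 else 0)
    (hsucc : ∀ k n, a (k + 1) n = a k n + if k + 1 ≤ n then a (k + 1) (n - (k + 1)) else 0)
    (k : ℕ) :
    (∏ j ∈ range k, (1 - X ^ (j + 1) : R⟦X⟧)) * mk (fun n => (a k n : R)) = 1 := by
  induction k with
  | zero =>
    ext n
    simp [h0, coeff_one]
  | succ k ih =>
    have hstep : (1 - X ^ (k + 1) : R⟦X⟧) * mk (fun n => (a (k + 1) n : R)) =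
        mk (fun n => (a k n : R)) := by
      ext n
      rw [sub_mul, one_mul, map_sub, coeff_X_pow_mul', coeff_mk, coeff_mk, coeff_mk, hsucc]
      split_ifs <;> simp
    rw [prod_range_succ, mul_assoc, hstep, ih]

theorem natCast_self_eq_zero (m : ℕ) : ((m : ℕ) : (ZMod m)⟦X⟧) = 0 := by
  rw [← map_natCast C, ZMod.natCast_self, map_zero]

end PowerSeries

namespace Multiset

theorem map_add_one_filter_ne_zero_add_replicate (t : Multiset ℕ) :
    (t.filter (· ≠ 0)).map (· + 1) + replicate (card t - card (t.filter (· ≠ 0))) 1 =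
      t.map (· + 1) := by
  have hzeros : (t.filter (· = 0)).map (· + 1) = replicate (card (t.filter (· = 0))) 1 := by
    rw [← map_const']
    exact map_congr rfl fun x hx => by rw [(mem_filter.1 hx).2]
  have hcard : card (t.filter (· = 0)) + card (t.filter (· ≠ 0)) = card t := by
    rw [← card_add, filter_add_not]
  rw [show card t - card (t.filter (· ≠ 0)) = card (t.filter (· = 0)) by omega, ← hzeros,
    ← map_add, add_comm, filter_add_not]

def durfee (s : Multiset ℕ) : ℕ :=
  Nat.findGreatest (fun i => i ≤ card (s.filter (i ≤ ·))) (card s)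

theorem le_durfee_iff {s : Multiset ℕ} {i : ℕ} :
    i ≤ durfee s ↔ i ≤ card (s.filter (i ≤ ·)) := by
  constructor
  · intro h
    have hd : durfee s ≤ card (s.filter (durfee s ≤ ·)) :=
      Nat.findGreatest_spec (P := fun i => i ≤ card (s.filter (i ≤ ·))) (m := 0)
        (Nat.zero_le _) (Nat.zero_le _)
    exact h.trans (hd.trans (card_le_card (monotone_filter_right s fun x hx => h.trans hx)))
  · exact fun h => Nat.le_findGreatest (h.trans (card_le_card (filter_le _ _))) h

theorem durfee_eq_iff {s : Multiset ℕ} {k : ℕ} :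
    durfee s = k ↔ k ≤ card (s.filter (k ≤ ·)) ∧ card (s.filter (k < ·)) ≤ k := by
  have h1 : k ≤ durfee s ↔ k ≤ card (s.filter (k ≤ ·)) := le_durfee_iff
  have h2 : k + 1 ≤ durfee s ↔ k + 1 ≤ card (s.filter (k < ·)) := le_durfee_iff
  omega

theorem durfee_sq_le_sum (s : Multiset ℕ) : durfee s ^ 2 ≤ s.sum := by
  set k := durfee s
  calc k ^ 2 ≤ card (s.filter (k ≤ ·)) • k := by
        rw [sq, smul_eq_mul]; exact Nat.mul_le_mul_right k (le_durfee_iff.1 le_rfl)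
    _ ≤ (s.filter (k ≤ ·)).sum := card_nsmul_le_sum fun _ hx => (mem_filter.1 hx).2
    _ ≤ (s.filter (k ≤ ·)).sum + (s.filter (¬ k ≤ ·)).sum := le_self_add
    _ = s.sum := by rw [← sum_add, filter_add_not]

/-- The partition with Durfee square of side `k`, parts `μ` below the square and parts `ν` to its
right: the rows through the square are the parts of `ν` lengthened by `k`, padded with parts
equal to `k`. -/
def durfeeJoin (k : ℕ) (μ ν : Multiset ℕ) : Multiset ℕ :=
  μ + replicate (k - card ν) k + ν.map (· + k)

def durfeeSplit (k : ℕ) (s : Multiset ℕ) : Multiset ℕ × Multiset ℕ :=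
  (s.filter (· ≤ k) - replicate (k - card (s.filter (k < ·))) k,
    (s.filter (k < ·)).map (· - k))

section DurfeeJoin

variable {k : ℕ} {μ ν : Multiset ℕ}

theorem sum_durfeeJoin (hν : card ν ≤ k) :
    (durfeeJoin k μ ν).sum = μ.sum + ν.sum + k ^ 2 := by
  simp only [durfeeJoin, sum_add, sum_replicate, sum_map_add, map_id', map_const', smul_eq_mul]
  have : (k - card ν) * k + card ν * k = k ^ 2 := by rw [← add_mul, Nat.sub_add_cancel hν, sq]
  omega

theorem filter_le_durfeeJoin (hμ : ∀ x ∈ μ, x ≤ k) (hν : ∀ x ∈ ν, 0 < x) :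
    (durfeeJoin k μ ν).filter (· ≤ k) = μ + replicate (k - card ν) k := by
  rw [durfeeJoin, filter_add, filter_eq_self.2, filter_eq_nil.2, add_zero]
  · simp only [mem_map]
    rintro _ ⟨x, hx, rfl⟩
    have := hν x hx
    omega
  · intro x hx
    rcases mem_add.1 hx with hx | hx
    exacts [hμ x hx, (eq_of_mem_replicate hx).le]

theorem filter_lt_durfeeJoin (hμ : ∀ x ∈ μ, x ≤ k) (hν : ∀ x ∈ ν, 0 < x) :
    (durfeeJoin k μ ν).filter (k < ·) = ν.map (· + k) := by
  rw [durfeeJoin, filter_add, filter_eq_nil.2, filter_eq_self.2, zero_add]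
  · simp only [mem_map]
    rintro _ ⟨x, hx, rfl⟩
    have := hν x hx
    omega
  · intro x hx
    rcases mem_add.1 hx with hx | hx
    · exact not_lt.2 (hμ x hx)
    · exact (eq_of_mem_replicate hx).le.not_gt

theorem durfeeSplit_durfeeJoin (hμ : ∀ x ∈ μ, x ≤ k) (hν : ∀ x ∈ ν, 0 < x) :
    durfeeSplit k (durfeeJoin k μ ν) = (μ, ν) := by
  rw [durfeeSplit, filter_le_durfeeJoin hμ hν, filter_lt_durfeeJoin hμ hν, card_map,
    add_tsub_cancel_right, map_map]
  simp

theorem durfee_durfeeJoin (hμ : ∀ x ∈ μ, x ≤ k) (hν : ∀ x ∈ ν, 0 < x)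
    (hk : card ν ≤ k) :
    durfee (durfeeJoin k μ ν) = k := by
  refine durfee_eq_iff.2 ⟨?_, by rw [filter_lt_durfeeJoin hμ hν, card_map]; exact hk⟩
  have hsq : ∀ x ∈ replicate (k - card ν) k + ν.map (· + k), k ≤ x := by
    intro x hx
    rcases mem_add.1 hx with hx | hx
    · exact (eq_of_mem_replicate hx).ge
    · obtain ⟨y, -, rfl⟩ := mem_map.1 hx
      exact Nat.le_add_left k y
  calc k = card (replicate (k - card ν) k + ν.map (· + k)) := by simp; omega
    _ = card ((replicate (k - card ν) k + ν.map (· + k)).filter (k ≤ ·)) := by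
        rw [filter_eq_self.2 hsq]
    _ ≤ card ((durfeeJoin k μ ν).filter (k ≤ ·)) :=
        card_le_card (filter_le_filter _ (by rw [durfeeJoin, add_assoc]; exact le_add_left _ _))

theorem pos_of_mem_durfeeJoin (hμ : ∀ x ∈ μ, 0 < x) (hν : ∀ x ∈ ν, 0 < x) {x : ℕ}
    (hx : x ∈ durfeeJoin k μ ν) : 0 < x := by
  rcases mem_add.1 hx with hx | hx
  · rcases mem_add.1 hx with hx | hx
    · exact hμ x hx
    · obtain ⟨hne, rfl⟩ := mem_replicate.1 hx
      omega
  · obtain ⟨y, hy, rfl⟩ := mem_map.1 hx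
    exact Nat.add_pos_left (hν y hy) k

end DurfeeJoin

section DurfeeSplit

variable {k : ℕ} {s : Multiset ℕ}

theorem le_of_mem_durfeeSplit_fst {x : ℕ} (hx : x ∈ (durfeeSplit k s).1) : x ≤ k :=
  (mem_filter.1 (mem_of_le tsub_le_self hx)).2

theorem pos_of_mem_durfeeSplit_snd {x : ℕ} (hx : x ∈ (durfeeSplit k s).2) : 0 < x := by
  obtain ⟨y, hy, rfl⟩ := mem_map.1 hx
  exact Nat.sub_pos_of_lt (mem_filter.1 hy).2

theorem card_durfeeSplit_snd (h : durfee s = k) : card (durfeeSplit k s).2 ≤ k :=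
  (card_map _ _).trans_le (durfee_eq_iff.1 h).2

theorem replicate_le_filter_le_of_durfee_eq (h : durfee s = k) :
    replicate (k - card (s.filter (k < ·))) k ≤ s.filter (· ≤ k) := by
  have hcount : card (s.filter (k ≤ ·)) ≤ count k s + card (s.filter (k < ·)) := by
    rw [count_eq_card_filter_eq, ← card_add, filter_add_filter, card_add]
    exact (card_le_card (monotone_filter_right s fun x (hx : k ≤ x) => hx.eq_or_lt)).trans
      (Nat.le_add_right _ _)
  rw [← le_count_iff_replicate_le, count_filter_of_pos (p := (· ≤ k)) le_rfl]
  have := (durfee_eq_iff.1 h).1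
  omega

theorem durfeeJoin_durfeeSplit (h : durfee s = k) :
    durfeeJoin k (durfeeSplit k s).1 (durfeeSplit k s).2 = s := by
  have hbig : ((s.filter (k < ·)).map (· - k)).map (· + k) = s.filter (k < ·) := by
    rw [map_map]
    exact (map_congr rfl fun x hx => Nat.sub_add_cancel (mem_filter.1 hx).2.le).trans (map_id' _)
  rw [durfeeJoin, durfeeSplit, card_map, tsub_add_cancel_of_le (replicate_le_filter_le_of_durfee_eq h), hbig]
  simpa only [not_le] using filter_add_not (· ≤ k) s

theorem sum_durfeeSplit (h : durfee s = k) :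
    (durfeeSplit k s).1.sum + (durfeeSplit k s).2.sum + k ^ 2 = s.sum := by
  rw [← sum_durfeeJoin (card_durfeeSplit_snd h), durfeeJoin_durfeeSplit h]

end DurfeeSplit

end Multiset

namespace Nat.Partition

def lengthAtMost (n k : ℕ) : Finset n.Partition :=
  univ.filter fun p => Multiset.card p.parts ≤ k

theorem parts_ne_zero {n : ℕ} (p : (n + 1).Partition) : p.parts ≠ 0 := fun h => by
  simpa [h] using p.parts_sum

theorem card_parts_le {n : ℕ} (p : n.Partition) : Multiset.card p.parts ≤ n := by
  simpa [p.parts_sum] using Multiset.card_nsmul_le_sum (a := 1) fun _ hi => p.parts_pos hi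

theorem card_restricted_le_zero (n : ℕ) :
    #(restricted n (· ≤ 0)) = if n = 0 then 1 else 0 := by
  rcases n with _ | n
  · simp [restricted]
  · simp only [restricted, nonpos_iff_eq_zero, Nat.add_one_ne_zero, if_false,
      Finset.card_eq_zero, filter_eq_empty_iff, mem_univ, true_implies]
    intro p hp
    obtain ⟨i, hi⟩ := Multiset.exists_mem_of_ne_zero p.parts_ne_zero
    exact (p.parts_pos hi).ne' (hp i hi)

theorem card_restricted_le_succ (n k : ℕ) :
    #(restricted n (· ≤ k + 1)) = #(restricted n (· ≤ k)) +
      if k + 1 ≤ n then #(restricted (n - (k + 1)) (· ≤ k + 1)) else 0 := by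
  rw [← card_filter_add_card_filter_not (p := fun p : n.Partition => k + 1 ∈ p.parts), add_comm]
  congr 1
  · simp only [restricted, filter_filter]
    refine congrArg card (filter_congr fun p _ => ⟨fun ⟨h, hk⟩ i hi => ?_, fun h => ?_⟩)
    · have : i ≠ k + 1 := by rintro rfl; exact hk hi
      have := h i hi
      omega
    · exact ⟨fun i hi => (h i hi).trans k.le_succ, fun hk => by simpa using h _ hk⟩
  · split_ifs with hn
    · refine card_bij'
        (fun p hp => partitionWithPartEquiv k.succ_pos hn ⟨p, (mem_filter.1 hp).2⟩)
        (fun q _ => ((partitionWithPartEquiv k.succ_pos hn).symm q).1) ?_ ?_ ?_ ?_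
      · intro p hp
        simp only [restricted, mem_filter, mem_univ, true_and] at hp ⊢
        simpa using fun i hi => hp.1 i (Multiset.mem_of_mem_erase hi)
      · intro q hq
        simp only [restricted, mem_filter, mem_univ, true_and] at hq ⊢
        simpa using hq
      · simp
      · simp
    · exact Finset.card_eq_zero.2 (filter_eq_empty_iff.2 fun p _ hp => hn (le_of_mem_parts hp))

theorem card_lengthAtMost_zero (n : ℕ) : #(lengthAtMost n 0) = if n = 0 then 1 else 0 := by
  rcases n with _ | n
  · simp [lengthAtMost]
  · simpa [lengthAtMost] using fun p => p.parts_ne_zero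

theorem card_filter_card_parts_eq {n m : ℕ} (hm : m ≤ n) :
    #{p : n.Partition | Multiset.card p.parts = m} = #(lengthAtMost (n - m) m) := by
  refine card_bij' (fun p hp => ofSums (n - m) (p.parts.map (· - 1)) ?_)
    (fun q hq =>
      ⟨q.parts.map (· + 1) + Multiset.replicate (m - Multiset.card q.parts) 1, ?_, ?_⟩)
    ?_ ?_ ?_ ?_
  · rw [Multiset.sum_map_tsub _ fun x hx => p.parts_pos hx]
    simp [p.parts_sum, (mem_filter.1 hp).2]
  · intro i hi
    rcases Multiset.mem_add.1 hi with hi | hi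
    · obtain ⟨j, -, rfl⟩ := Multiset.mem_map.1 hi
      exact j.succ_pos
    · exact (Multiset.eq_of_mem_replicate hi).symm ▸ Nat.one_pos
  · have hq : Multiset.card q.parts ≤ m := (mem_filter.1 hq).2
    simp [Multiset.sum_map_add, q.parts_sum]
    omega
  · intro p hp
    have hp : Multiset.card p.parts = m := (mem_filter.1 hp).2
    simp only [lengthAtMost, mem_filter, mem_univ, true_and, ofSums_parts]
    exact hp ▸ (Multiset.card_le_card (Multiset.filter_le _ _)).trans (Multiset.card_map _ _).le
  · intro q hq
    have hq : Multiset.card q.parts ≤ m := (mem_filter.1 hq).2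
    simp only [mem_filter, mem_univ, true_and, Multiset.card_add, Multiset.card_map,
      Multiset.card_replicate]
    omega
  · intro p hp
    have hp : Multiset.card p.parts = m := (mem_filter.1 hp).2
    ext1
    simp only [ofSums_parts]
    rw [← hp, ← Multiset.card_map (· - 1) p.parts,
      Multiset.map_add_one_filter_ne_zero_add_replicate, Multiset.map_map]
    exact (Multiset.map_congr rfl fun x hx => Nat.sub_add_cancel (p.parts_pos hx)).trans
      (Multiset.map_id' _)
  · intro q hq
    ext1
    simp only [Multiset.map_add, Multiset.map_map, Function.comp_apply, add_tsub_cancel_right,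
      Multiset.map_id', Multiset.map_replicate, tsub_self, ofSums_parts, ne_eq, Multiset.filter_add]
    rw [Multiset.filter_eq_self.2 fun x hx => (q.parts_pos hx).ne',
      Multiset.filter_eq_nil.2 fun x hx => by simp [Multiset.eq_of_mem_replicate hx], add_zero]

theorem card_lengthAtMost_succ (n k : ℕ) :
    #(lengthAtMost n (k + 1)) = #(lengthAtMost n k) +
      if k + 1 ≤ n then #(lengthAtMost (n - (k + 1)) (k + 1)) else 0 := by
  rw [← card_filter_add_card_filter_not (p := fun p : n.Partition => Multiset.card p.parts ≤ k)]
  simp only [lengthAtMost, filter_filter]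
  congr 1
  · exact congrArg card (filter_congr fun p _ => by omega)
  · rw [filter_congr fun p _ => show _ ∧ ¬ _ ↔ Multiset.card p.parts = k + 1 by omega]
    split_ifs with hn
    · exact card_filter_card_parts_eq hn
    · exact Finset.card_eq_zero.2 (filter_eq_empty_iff.2 fun p _ hp => hn (hp ▸ p.card_parts_le))

section GeneratingFunctions

variable {R : Type*} [CommRing R]

theorem prod_one_sub_X_pow_mul_mk_card_restricted (k : ℕ) :
    (∏ j ∈ range k, (1 - X ^ (j + 1) : R⟦X⟧)) *
      PowerSeries.mk (fun n => (#(restricted n (· ≤ k)) : R)) = 1 :=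
  prod_one_sub_X_pow_mul_mk_eq_one (fun k n => #(restricted n (· ≤ k))) card_restricted_le_zero
    (fun k n => card_restricted_le_succ n k) k

theorem prod_one_sub_X_pow_mul_mk_card_lengthAtMost (k : ℕ) :
    (∏ j ∈ range k, (1 - X ^ (j + 1) : R⟦X⟧)) *
      PowerSeries.mk (fun n => (#(lengthAtMost n k) : R)) = 1 :=
  prod_one_sub_X_pow_mul_mk_eq_one (fun k n => #(lengthAtMost n k)) card_lengthAtMost_zero
    (fun k n => card_lengthAtMost_succ n k) k

end GeneratingFunctions


theorem sigma_ext {x y : Σ ab : ℕ × ℕ, ab.1.Partition × ab.2.Partition}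
    (h₁ : x.2.1.parts = y.2.1.parts) (h₂ : x.2.2.parts = y.2.2.parts) : x = y := by
  obtain ⟨⟨a, b⟩, μ, ν⟩ := x
  obtain ⟨⟨a', b'⟩, μ', ν'⟩ := y
  dsimp only at h₁ h₂ μ ν μ' ν'
  obtain rfl : a = a' := μ.parts_sum.symm.trans (h₁ ▸ μ'.parts_sum)
  obtain rfl : b = b' := ν.parts_sum.symm.trans (h₂ ▸ ν'.parts_sum)
  rw [Partition.ext h₁, Partition.ext h₂]

def durfeePairs (m k : ℕ) : Finset (Σ ab : ℕ × ℕ, ab.1.Partition × ab.2.Partition) :=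
  (antidiagonal m).sigma fun ab => restricted ab.1 (· ≤ k) ×ˢ lengthAtMost ab.2 k

theorem mem_durfeePairs {m k : ℕ} {x : Σ ab : ℕ × ℕ, ab.1.Partition × ab.2.Partition} :
    x ∈ durfeePairs m k ↔
      x.1.1 + x.1.2 = m ∧ (∀ i ∈ x.2.1.parts, i ≤ k) ∧
        Multiset.card x.2.2.parts ≤ k := by
  simp [durfeePairs, restricted, lengthAtMost]

theorem card_durfeePairs (m k : ℕ) :
    #(durfeePairs m k) =
      ∑ ab ∈ antidiagonal m, #(restricted ab.1 (· ≤ k)) * #(lengthAtMost ab.2 k) := by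
  simp [durfeePairs]

open Multiset (durfeeJoin durfeeSplit) in
theorem card_filter_durfee_eq_card_durfeePairs {n k : ℕ} (hk : k ^ 2 ≤ n) :
    #{p : n.Partition | p.parts.durfee = k} = #(durfeePairs (n - k ^ 2) k) := by
  refine card_bij'
    (fun p _ => ⟨((durfeeSplit k p.parts).1.sum, (durfeeSplit k p.parts).2.sum),
      ⟨(durfeeSplit k p.parts).1,
        fun hx => p.parts_pos (Multiset.mem_of_le (tsub_le_self.trans (Multiset.filter_le _ _)) hx),
        rfl⟩,
      ⟨(durfeeSplit k p.parts).2, Multiset.pos_of_mem_durfeeSplit_snd, rfl⟩⟩)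
    (fun x hx => ⟨durfeeJoin k x.2.1.parts x.2.2.parts,
      Multiset.pos_of_mem_durfeeJoin (fun _ => x.2.1.parts_pos) (fun _ => x.2.2.parts_pos), by
        obtain ⟨hab, -, hν⟩ := mem_durfeePairs.1 hx
        rw [Multiset.sum_durfeeJoin hν, x.2.1.parts_sum, x.2.2.parts_sum]
        omega⟩) ?_ ?_ ?_ ?_
  · intro p hp
    replace hp : p.parts.durfee = k := (mem_filter.1 hp).2
    have hsum := Multiset.sum_durfeeSplit hp
    rw [p.parts_sum] at hsum
    exact mem_durfeePairs.2 ⟨by dsimp only; omega, fun _ => Multiset.le_of_mem_durfeeSplit_fst,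
      Multiset.card_durfeeSplit_snd hp⟩
  · intro x hx
    obtain ⟨-, hμ, hν⟩ := mem_durfeePairs.1 hx
    exact mem_filter.2
      ⟨mem_univ _, Multiset.durfee_durfeeJoin hμ (fun _ => x.2.2.parts_pos) hν⟩
  · intro p hp
    exact Partition.ext (Multiset.durfeeJoin_durfeeSplit (mem_filter.1 hp).2)
  · intro x hx
    have h := Multiset.durfeeSplit_durfeeJoin (mem_durfeePairs.1 hx).2.1 (fun _ => x.2.2.parts_pos)
    exact sigma_ext (congrArg Prod.fst h) (congrArg Prod.snd h)

theorem card_filter_durfee_eq_coeff (R : Type*) [CommRing R] (n k : ℕ) :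
    (#{p : n.Partition | p.parts.durfee = k} : R) = coeff n (X ^ (k ^ 2) *
      (PowerSeries.mk (fun n => (#(restricted n (· ≤ k)) : R)) *
        PowerSeries.mk (fun n => (#(lengthAtMost n k) : R)))) := by
  rw [coeff_X_pow_mul']
  split_ifs with hk
  · rw [card_filter_durfee_eq_card_durfeePairs hk, card_durfeePairs, coeff_mul]
    simp
  · have hempty : #{p : n.Partition | p.parts.durfee = k} = 0 :=
      Finset.card_eq_zero.2 (filter_eq_empty_iff.2 fun p _ hp =>
        hk (by simpa [hp, p.parts_sum] using Multiset.durfee_sq_le_sum p.parts))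
    rw [hempty, Nat.cast_zero]

theorem card_eq_sum_card_filter_durfee (n : ℕ) :
    Fintype.card n.Partition =
      ∑ k ∈ range (n + 1), #{p : n.Partition | p.parts.durfee = k} := by
  rw [← Finset.card_univ]
  refine card_eq_sum_card_fiberwise fun p _ => mem_range.2 (Nat.lt_succ_of_le ?_)
  calc p.parts.durfee ≤ p.parts.durfee ^ 2 := Nat.le_self_pow two_ne_zero _
    _ ≤ n := (Multiset.durfee_sq_le_sum _).trans_eq p.parts_sum

end Nat.Partition

open Nat.Partition in
theorem sum_coeff_X_pow_sq_mul_eq_card_partition {R : Type*} [CommRing R] (u : ℕ → R⟦X⟧)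
    (hu : ∀ k, (∏ j ∈ range k, (1 - X ^ (j + 1) : R⟦X⟧)) ^ 2 * u k = 1) (n : ℕ) :
    ∑ k ∈ range (n + 1), coeff n (X ^ (k ^ 2) * u k : R⟦X⟧) = Fintype.card n.Partition := by
  have hu_eq (k : ℕ) : u k = PowerSeries.mk (fun n => (#(restricted n (· ≤ k)) : R)) *
      PowerSeries.mk (fun n => (#(lengthAtMost n k) : R)) := by
    refine (left_inv_eq_right_inv (a := (∏ j ∈ range k, (1 - X ^ (j + 1) : R⟦X⟧)) ^ 2) ?_
      (hu k)).symm
    rw [mul_comm, sq, mul_mul_mul_comm, prod_one_sub_X_pow_mul_mk_card_restricted,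
      prod_one_sub_X_pow_mul_mk_card_lengthAtMost, one_mul]
  rw [card_eq_sum_card_filter_durfee, Nat.cast_sum]
  exact sum_congr rfl fun k _ => by rw [hu_eq, card_filter_durfee_eq_coeff]

theorem coeff_psSum_psDiv_X_pow_sq (g : ℕ → ℤ⟦X⟧) (n : ℕ) :
    coeff n (psSum fun k => psDiv (X ^ (k ^ 2)) (g k)) =
      ∑ k ∈ range (n + 1), coeff n (psDiv (X ^ (k ^ 2)) (g k)) := by
  rw [psSum, coeff_mk]
  refine tsum_eq_sum fun k hk => ?_
  rw [psDiv, coeff_X_pow_mul', if_neg]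
  have := Nat.le_self_pow two_ne_zero k
  simp only [mem_range] at hk
  omega

theorem coeff_psSum_psDiv_X_pow_sq_modEq (m : ℕ) (g : ℕ → ℤ⟦X⟧)
    (hg : ∀ k, constantCoeff (g k) = 1)
    (hgm : ∀ k, map (Int.castRingHom (ZMod m)) (g k) = (∏ j ∈ range k, (1 - X ^ (j + 1))) ^ 2)
    (n : ℕ) :
    coeff n (psSum fun k => psDiv (X ^ (k ^ 2)) (g k)) ≡ Fintype.card n.Partition [ZMOD m] := by
  rw [← ZMod.intCast_eq_intCast_iff, coeff_psSum_psDiv_X_pow_sq, Int.cast_sum, Int.cast_natCast,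
    ← sum_coeff_X_pow_sq_mul_eq_card_partition
      (fun k => map (Int.castRingHom (ZMod m)) (invOfUnit (g k) 1))]
  · refine sum_congr rfl fun k _ => ?_
    rw [psDiv, show (X ^ (k ^ 2) : (ZMod m)⟦X⟧) = map (Int.castRingHom (ZMod m)) (X ^ (k ^ 2))
      by simp, ← map_mul, coeff_map, eq_intCast]
  · intro k
    rw [← hgm, ← map_mul, mul_invOfUnit _ _ (by simp [hg]), map_one]

theorem constantCoeff_qPoch {a : ℤ⟦X⟧} (ha : constantCoeff a = 0) (b : ℤ⟦X⟧) (n : ℕ) :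
    constantCoeff (qPoch a b n) = 1 := by
  simp [qPoch, map_prod, ha]

theorem map_zmod_four_qPoch_neg_X_X_sq (k : ℕ) :
    map (Int.castRingHom (ZMod 4)) (qPoch (-X) X k ^ 2) =
      (∏ j ∈ range k, (1 - X ^ (j + 1))) ^ 2 := by
  rw [map_pow, qPoch, map_prod, ← prod_pow, ← prod_pow]
  refine prod_congr rfl fun j _ => ?_
  simp only [map_sub, map_mul, map_neg, map_one, map_pow, map_X]
  linear_combination X ^ (j + 1) * natCast_self_eq_zero 4

theorem map_zmod_two_qPoch_neg_X_sq_X_sq (k : ℕ) :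
    map (Int.castRingHom (ZMod 2)) (qPoch (-(X ^ 2)) (X ^ 2) k) =
      (∏ j ∈ range k, (1 - X ^ (j + 1))) ^ 2 := by
  rw [qPoch, map_prod, ← prod_pow]
  refine prod_congr rfl fun j _ => ?_
  simp only [map_sub, map_mul, map_neg, map_one, map_pow, map_X]
  linear_combination X ^ (j + 1) * natCast_self_eq_zero 2

/-- For every `n ≥ 0`, `c(f⁽³⁾;n) ≡ p(n) (mod 4)` and `c(φ⁽³⁾;n) ≡ p(n) (mod 2)`,
where `p(n)` is the number of partitions of `n`. -/
theorem mockF3_mockPhi3_partition (n : ℕ) :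
    PowerSeries.coeff n mockF3 ≡ (Fintype.card (Nat.Partition n) : ℤ) [ZMOD 4] ∧
    PowerSeries.coeff n mockPhi3 ≡ (Fintype.card (Nat.Partition n) : ℤ) [ZMOD 2] :=
  ⟨coeff_psSum_psDiv_X_pow_sq_modEq 4 _
      (fun k => by rw [map_pow, constantCoeff_qPoch (by simp), one_pow])
      map_zmod_four_qPoch_neg_X_X_sq n,
    coeff_psSum_psDiv_X_pow_sq_modEq 2 _ (fun k => constantCoeff_qPoch (by simp) _ k)
      map_zmod_two_qPoch_neg_X_sq_X_sq n⟩
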